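/- Let L be a pairwise loss function that is Lipschitz continuous with constant |L|₁, differentiable in its fifth argument with derivative D₅L, let Φ : X×X → H be measurable with ‖k‖_∞ := sup ‖Φ(x,x')‖_H < ∞, P a Borel probability measure on X×Y, λ > 0, and let f_P ∈ H be any minimizer of the regularized shifted risk R^reg_{L*,P,λ} over H. Then for every g ∈ H, ∫ D₅L(x,y,x',y',f̂_P(x,x'))·ĝ(x,x') d(P⊗P)(x,y,x',y') + 2λ·⟪f_P, g⟫_H = 0. -/

import Mathlib

/-!
Perturb the minimizer along a direction `g`: `t ↦ R^reg(f_P + t g)` has a minimum at `t = 0`, so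
its derivative there vanishes. The regularizer contributes `2λ⟪f_P, g⟫`. For the risk term,
differentiation under the integral is justified by dominated convergence: Lipschitz continuity
bounds `D₅L` by `|L|₁`, and the bounded kernel bounds `ĝ` by `‖g‖ ‖k‖_∞`; the shift by
`L(·, 0)` makes the loss itself integrable, as `|L*(f̂)| ≤ |L|₁ ‖f‖ ‖k‖_∞`. Measurability of
`D₅L(·, f̂_P)` comes from writing it as a pointwise limit of difference quotients of `L`.
-/

open MeasureTheory

/-- The function on `X × X` induced by an element `f` of the RKHS with feature map `Φ`:
`f̂(x,x') = ⟪f, Φ(x,x')⟫_H` (reproducing property). -/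
noncomputable def fhat {X H : Type*} [NormedAddCommGroup H] [InnerProductSpace ℝ H]
    (Φ : X × X → H) (f : H) : X × X → ℝ :=
  fun p => @inner ℝ H _ f (Φ p)

/-- The shifted risk `R_{L*,P}(f) = ∫ L(x,y,x',y',f(x,x')) - L(x,y,x',y',0) d(P⊗P)`. -/
noncomputable def shiftedRisk {X Y : Type*} [MeasurableSpace X] [MeasurableSpace Y]
    (L : X → Y → X → Y → ℝ → ℝ) (P : Measure (X × Y)) (f : X × X → ℝ) : ℝ :=
  ∫ z : (X × Y) × (X × Y),
    (L z.1.1 z.1.2 z.2.1 z.2.2 (f (z.1.1, z.2.1)) - L z.1.1 z.1.2 z.2.1 z.2.2 0) ∂(P.prod P)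

/-- The regularized shifted risk `R^reg_{L*,P,λ}(f) = R_{L*,P}(f̂) + λ‖f‖²` for `f ∈ H`. -/
noncomputable def regRisk {X Y H : Type*} [MeasurableSpace X] [MeasurableSpace Y]
    [NormedAddCommGroup H] [InnerProductSpace ℝ H]
    (L : X → Y → X → Y → ℝ → ℝ) (Φ : X × X → H) (P : Measure (X × Y))
    (lam : ℝ) (f : H) : ℝ :=
  shiftedRisk L P (fhat Φ f) + lam * ‖f‖ ^ 2

open Filter Topology

theorem measurable_deriv_comp_of_hasDerivAt {α : Type*} [MeasurableSpace α] {F F' : α → ℝ → ℝ}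
    (hF : Measurable (Function.uncurry F)) (hF' : ∀ a t, HasDerivAt (F a) (F' a t) t)
    {φ : α → ℝ} (hφ : Measurable φ) : Measurable fun a => F' a (φ a) := by
  have hu : Tendsto (fun n : ℕ => (n : ℝ)⁻¹) atTop (𝓝[≠] 0) :=
    (tendsto_inv_atTop_nhdsGT_zero.comp tendsto_natCast_atTop_atTop).mono_right
      (nhdsWithin_mono _ fun _ h => ne_of_gt h)
  refine measurable_of_tendsto_metrizable (f := fun n a =>
    ((n : ℝ)⁻¹)⁻¹ • (F a (φ a + (n : ℝ)⁻¹) - F a (φ a))) (fun n => ?_) ?_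
  · exact ((hF.comp (measurable_id.prodMk (hφ.add_const _))).sub
      (hF.comp (measurable_id.prodMk hφ))).const_smul ((n : ℝ)⁻¹)⁻¹
  · exact tendsto_pi_nhds.2 fun a =>
      (hasDerivAt_iff_tendsto_slope_zero.1 (hF' a (φ a))).comp hu

theorem hasDerivAt_integral_sub_comp_add_mul {α : Type*} [MeasurableSpace α] {μ : Measure α}
    [IsFiniteMeasure μ] {F F' : α → ℝ → ℝ} {c : ℝ} (hc : 0 ≤ c)
    (hF : Measurable (Function.uncurry F)) (hlip : ∀ a s t, |F a t - F a s| ≤ c * |t - s|)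
    (hF' : ∀ a t, HasDerivAt (F a) (F' a t) t) {φ γ : α → ℝ} (hφ : Measurable φ)
    (hγ : Measurable γ) {Cφ Cγ : ℝ} (hφb : ∀ a, |φ a| ≤ Cφ) (hγb : ∀ a, |γ a| ≤ Cγ) :
    HasDerivAt (fun t => ∫ a, F a (φ a + t * γ a) - F a 0 ∂μ) (∫ a, F' a (φ a) * γ a ∂μ) 0 := by
  have hF'_le : ∀ a t, |F' a t| ≤ c := fun a t => by
    simpa using (hF' a t).le_of_lip' hc (Eventually.of_forall fun s => hlip a t s)
  have hFφ : ∀ ψ : α → ℝ, Measurable ψ → Measurable fun a => F a (ψ a) := fun ψ hψ =>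
    hF.comp (measurable_id.prodMk hψ)
  have hint : Integrable (fun a => F a (φ a + 0 * γ a) - F a 0) μ := by
    refine (integrable_const (c * Cφ)).mono'
      ((hFφ _ (hφ.add (hγ.const_mul 0))).sub (hFφ _ measurable_const)).aestronglyMeasurable
      (ae_of_all _ fun a => ?_)
    calc ‖F a (φ a + 0 * γ a) - F a 0‖ ≤ c * |φ a - 0| := by simpa using hlip a 0 (φ a)
      _ ≤ c * Cφ := by simpa using mul_le_mul_of_nonneg_left (hφb a) hc
  obtain ⟨-, hderiv⟩ := hasDerivAt_integral_of_dominated_loc_of_deriv_le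
    (F' := fun t a => F' a (φ a + t * γ a) * γ a) (x₀ := 0) (bound := fun _ => c * Cγ)
    Filter.univ_mem
    (Eventually.of_forall fun t =>
      ((hFφ _ (hφ.add (hγ.const_mul t))).sub (hFφ _ measurable_const)).aestronglyMeasurable)
    hint
    ((measurable_deriv_comp_of_hasDerivAt hF hF' (hφ.add (hγ.const_mul 0))).mul
      hγ).aestronglyMeasurable
    (ae_of_all _ fun a t _ => by
      simpa only [norm_mul, Real.norm_eq_abs] using
        mul_le_mul (hF'_le a _) (hγb a) (abs_nonneg _) hc)
    (integrable_const _)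
    (ae_of_all _ fun a t _ =>
      ((hF' a _).comp t (((hasDerivAt_id t).mul_const (γ a)).const_add (φ a))).sub_const _
        |>.congr_deriv (by simp))
  simpa using hderiv

section RKHS

variable {X Y H : Type*} [NormedAddCommGroup H] [InnerProductSpace ℝ H] {Φ : X × X → H}

theorem measurable_fhat [MeasurableSpace X] [MeasurableSpace H] [BorelSpace H]
    (hΦ : Measurable Φ) (f : H) : Measurable (fhat Φ f) :=
  (continuous_const.inner continuous_id).measurable.comp hΦ

theorem abs_fhat_le {kb : ℝ} (hkb : ∀ p, ‖Φ p‖ ≤ kb) (f : H) (p : X × X) :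
    |fhat Φ f p| ≤ ‖f‖ * kb :=
  (abs_real_inner_le_norm _ _).trans (mul_le_mul_of_nonneg_left (hkb p) (norm_nonneg f))

theorem fhat_add_smul (f g : H) (t : ℝ) :
    fhat Φ (f + t • g) = fun p => fhat Φ f p + t * fhat Φ g p := by
  ext p
  simp [fhat, inner_add_left, real_inner_smul_left]

variable [MeasurableSpace X] [MeasurableSpace Y] {L D₅L : X → Y → X → Y → ℝ → ℝ} {c : ℝ}
  (P : Measure (X × Y)) [IsFiniteMeasure P]

theorem hasDerivAt_shiftedRisk_add_mul
    (hL_meas : Measurable fun p : (X × Y) × (X × Y) × ℝ => L p.1.1 p.1.2 p.2.1.1 p.2.1.2 p.2.2)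
    (hc : 0 ≤ c) (hL_lip : ∀ x y x' y' s t, |L x y x' y' t - L x y x' y' s| ≤ c * |t - s|)
    (hL_deriv : ∀ x y x' y' t, HasDerivAt (L x y x' y') (D₅L x y x' y' t) t)
    {φ γ : X × X → ℝ} (hφ : Measurable φ) (hγ : Measurable γ) {Cφ Cγ : ℝ}
    (hφb : ∀ p, |φ p| ≤ Cφ) (hγb : ∀ p, |γ p| ≤ Cγ) :
    HasDerivAt (fun t => shiftedRisk L P fun p => φ p + t * γ p)
      (∫ z : (X × Y) × (X × Y),
        D₅L z.1.1 z.1.2 z.2.1 z.2.2 (φ (z.1.1, z.2.1)) * γ (z.1.1, z.2.1) ∂(P.prod P)) 0 :=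
  hasDerivAt_integral_sub_comp_add_mul
    (F := fun z : (X × Y) × (X × Y) => L z.1.1 z.1.2 z.2.1 z.2.2) hc
    (hL_meas.comp (f := fun q : ((X × Y) × (X × Y)) × ℝ => (q.1.1, q.1.2, q.2)) (by fun_prop))
    (fun z => hL_lip _ _ _ _) (fun z => hL_deriv _ _ _ _)
    (hφ.comp (by fun_prop)) (hγ.comp (by fun_prop)) (fun z => hφb _) (fun z => hγb _)

theorem hasDerivAt_regRisk_add_smul [MeasurableSpace H] [BorelSpace H]
    (hL_meas : Measurable fun p : (X × Y) × (X × Y) × ℝ => L p.1.1 p.1.2 p.2.1.1 p.2.1.2 p.2.2)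
    (hc : 0 ≤ c) (hL_lip : ∀ x y x' y' s t, |L x y x' y' t - L x y x' y' s| ≤ c * |t - s|)
    (hL_deriv : ∀ x y x' y' t, HasDerivAt (L x y x' y') (D₅L x y x' y' t) t) (hΦ : Measurable Φ)
    {kb : ℝ} (hkb : ∀ p, ‖Φ p‖ ≤ kb) (lam : ℝ) (f g : H) :
    HasDerivAt (fun t : ℝ => regRisk L Φ P lam (f + t • g))
      ((∫ z : (X × Y) × (X × Y),
          D₅L z.1.1 z.1.2 z.2.1 z.2.2 (fhat Φ f (z.1.1, z.2.1)) * fhat Φ g (z.1.1, z.2.1)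
          ∂(P.prod P)) + 2 * lam * (@inner ℝ H _ f g)) 0 := by
  have hrisk := hasDerivAt_shiftedRisk_add_mul P hL_meas hc hL_lip hL_deriv
    (measurable_fhat hΦ f) (measurable_fhat hΦ g) (abs_fhat_le hkb f) (abs_fhat_le hkb g)
  have hnorm : HasDerivAt (fun t : ℝ => ‖f + t • g‖ ^ 2) (2 * @inner ℝ H _ f g) 0 := by
    simpa using (((hasDerivAt_id (0 : ℝ)).smul_const g).const_add f).norm_sq
  simp only [regRisk, fhat_add_smul]
  exact (hrisk.add (hnorm.const_mul lam)).congr_deriv (by ring)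

end RKHS

theorem regularized_minimizer_first_order_general
    {X Y H : Type*} [MeasurableSpace X] [MeasurableSpace Y]
    [NormedAddCommGroup H] [InnerProductSpace ℝ H]
    [MeasurableSpace H] [BorelSpace H]
    (L D₅L : X → Y → X → Y → ℝ → ℝ)
    (hL_meas : Measurable fun p : (X × Y) × (X × Y) × ℝ => L p.1.1 p.1.2 p.2.1.1 p.2.1.2 p.2.2)
    (c : ℝ) (hc : 0 ≤ c)
    (hL_lip : ∀ x y x' y' s t, |L x y x' y' t - L x y x' y' s| ≤ c * |t - s|)
    (hL_deriv : ∀ x y x' y' t, HasDerivAt (L x y x' y') (D₅L x y x' y' t) t)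
    (Φ : X × X → H) (hΦ : Measurable Φ)
    (kb : ℝ) (hkb : ∀ p : X × X, ‖Φ p‖ ≤ kb)
    (P : Measure (X × Y)) [IsProbabilityMeasure P]
    (lam : ℝ)
    (fP : H) (hfP : ∀ g : H, regRisk L Φ P lam fP ≤ regRisk L Φ P lam g) :
    ∀ g : H,
      (∫ z : (X × Y) × (X × Y),
          D₅L z.1.1 z.1.2 z.2.1 z.2.2 (fhat Φ fP (z.1.1, z.2.1)) * fhat Φ g (z.1.1, z.2.1)
          ∂(P.prod P))
        + 2 * lam * (@inner ℝ H _ fP g) = 0 := by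
  intro g
  have hmin : IsLocalMin (fun t : ℝ => regRisk L Φ P lam (fP + t • g)) 0 :=
    Eventually.of_forall fun t => by simpa using hfP (fP + t • g)
  exact hmin.hasDerivAt_eq_zero
    (hasDerivAt_regRisk_add_smul P hL_meas hc hL_lip hL_deriv hΦ hkb lam fP g)

/-- **First-order condition for the regularized minimizer** (Lemma A.2.3). If `L` is Lipschitz
and differentiable in its fifth argument with derivative `D₅L`, the kernel is bounded, and
`f_P ∈ H` minimizes the regularized shifted risk, then for every `g ∈ H`,
`∫ D₅L(x,y,x',y',f̂_P(x,x')) ĝ(x,x') d(P⊗P) + 2λ⟪f_P, g⟫ = 0`. -/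
theorem regularized_minimizer_first_order
    {X Y H : Type*} [MeasurableSpace X] [MeasurableSpace Y]
    [NormedAddCommGroup H] [InnerProductSpace ℝ H] [CompleteSpace H]
    [MeasurableSpace H] [BorelSpace H]
    (L D₅L : X → Y → X → Y → ℝ → ℝ)
    (hL_meas : Measurable fun p : (X × Y) × (X × Y) × ℝ => L p.1.1 p.1.2 p.2.1.1 p.2.1.2 p.2.2)
    (hL_nonneg : ∀ x y x' y' t, 0 ≤ L x y x' y' t)
    (c : ℝ) (hc : 0 ≤ c)
    (hL_lip : ∀ x y x' y' s t, |L x y x' y' t - L x y x' y' s| ≤ c * |t - s|)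
    (hL_deriv : ∀ x y x' y' t, HasDerivAt (L x y x' y') (D₅L x y x' y' t) t)
    (Φ : X × X → H) (hΦ : Measurable Φ)
    (kb : ℝ) (hkb : ∀ p : X × X, ‖Φ p‖ ≤ kb)
    (P : Measure (X × Y)) [IsProbabilityMeasure P]
    (lam : ℝ) (hlam : 0 < lam)
    (fP : H) (hfP : ∀ g : H, regRisk L Φ P lam fP ≤ regRisk L Φ P lam g) :
    ∀ g : H,
      (∫ z : (X × Y) × (X × Y),
          D₅L z.1.1 z.1.2 z.2.1 z.2.2 (fhat Φ fP (z.1.1, z.2.1)) * fhat Φ g (z.1.1, z.2.1)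
          ∂(P.prod P))
        + 2 * lam * (@inner ℝ H _ fP g) = 0 :=
  regularized_minimizer_first_order_general L D₅L hL_meas c hc hL_lip hL_deriv Φ hΦ kb hkb P lam fP
    hfP
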